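/- Let Wⱼ ⪰ W̃ⱼ ⪰ 0 for j = 1,…,N be positive semidefinite operators on ℂ^{dⱼ}, and define 𝒲 = ⊗ⱼWⱼ − ⊗ⱼW̃ⱼ. If ρ is a fully separable state, i.e., a finite convex combination ρ = Σ_q λ_q ⊗ⱼ ρ_{j,q} of product density matrices with λ_q ≥ 0, Σ_q λ_q = 1, then Tr(𝒲ρ) ≥ 0. -/

import Mathlib

open ComplexOrder Matrix

/-- The `N`-fold "Kronecker" product of local matrices, realized on the index type
`∀ j, Fin (d j)` with entries `∏ j, W j (x j) (y j)`. -/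
def prodMat {N : ℕ} {d : Fin N → ℕ} (W : ∀ j, Matrix (Fin (d j)) (Fin (d j)) ℂ) :
    Matrix (∀ j, Fin (d j)) (∀ j, Fin (d j)) ℂ :=
  Matrix.of fun x y => ∏ j, W j (x j) (y j)

/-!
For PSD `A ⪰ A' ⪰ 0` and PSD `σ`, `0 ≤ Tr(A'σ) ≤ Tr(Aσ)` (write `σ = yᴴy`, so `Tr(Aσ) = Tr(yAyᴴ)`).
Since `Tr((⊗ⱼAⱼ)(⊗ⱼσⱼ)) = ∏ⱼ Tr(Aⱼσⱼ)`, the product of these chains of inequalities gives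
`Tr(⊗ⱼW̃ⱼ ρ) ≤ Tr(⊗ⱼWⱼ ρ)` for every product state `ρ`, and the claim follows by convexity.
-/

namespace Matrix

variable {𝕜 n : Type*} [RCLike 𝕜] [Fintype n]

theorem PosSemidef.trace_mul_nonneg {A B : Matrix n n 𝕜} (hA : A.PosSemidef)
    (hB : B.PosSemidef) : 0 ≤ (A * B).trace := by
  classical
  open scoped MatrixOrder in
  obtain ⟨y, rfl⟩ := CStarAlgebra.nonneg_iff_eq_star_mul_self.mp hB.nonneg
  rw [star_eq_conjTranspose, ← Matrix.mul_assoc, trace_mul_cycle]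
  exact (hA.mul_mul_conjTranspose_same y).trace_nonneg

theorem trace_mul_le_trace_mul_of_posSemidef_sub {A A' B : Matrix n n 𝕜}
    (hAA' : (A - A').PosSemidef) (hB : B.PosSemidef) : (A' * B).trace ≤ (A * B).trace := by
  simpa only [Matrix.sub_mul, trace_sub, sub_nonneg] using hAA'.trace_mul_nonneg hB

end Matrix

section prodMat

variable {N : ℕ} {d : Fin N → ℕ}

theorem prodMat_mul_prodMat (A B : ∀ j, Matrix (Fin (d j)) (Fin (d j)) ℂ) :
    prodMat A * prodMat B = prodMat fun j => A j * B j := by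
  ext x y
  simp only [prodMat, mul_apply, of_apply, Fintype.prod_sum, ← Finset.prod_mul_distrib]

theorem trace_prodMat (A : ∀ j, Matrix (Fin (d j)) (Fin (d j)) ℂ) :
    (prodMat A).trace = ∏ j, (A j).trace := by
  simp only [trace, diag, prodMat, of_apply, Fintype.prod_sum]

theorem trace_prodMat_sub_mul_prodMat_nonneg {W Wt σ : ∀ j, Matrix (Fin (d j)) (Fin (d j)) ℂ}
    (hord : ∀ j, (W j - Wt j).PosSemidef) (hpos : ∀ j, (Wt j).PosSemidef)
    (hσ : ∀ j, (σ j).PosSemidef) : 0 ≤ ((prodMat W - prodMat Wt) * prodMat σ).trace := by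
  rw [Matrix.sub_mul, trace_sub, sub_nonneg, prodMat_mul_prodMat, prodMat_mul_prodMat,
    trace_prodMat, trace_prodMat]
  exact Finset.prod_le_prod (fun j _ => (hpos j).trace_mul_nonneg (hσ j))
    fun j _ => trace_mul_le_trace_mul_of_posSemidef_sub (hord j) (hσ j)

end prodMat

theorem stmt_3_general {N : ℕ} {d : Fin N → ℕ}
    (W Wt : ∀ j, Matrix (Fin (d j)) (Fin (d j)) ℂ)
    (hord : ∀ j, (W j - Wt j).PosSemidef) (hpos : ∀ j, (Wt j).PosSemidef)
    (ρ : Matrix (∀ j, Fin (d j)) (∀ j, Fin (d j)) ℂ)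
    (m : ℕ) (lam : Fin m → ℝ) (ρs : Fin m → ∀ j, Matrix (Fin (d j)) (Fin (d j)) ℂ)
    (hlam : ∀ q, 0 ≤ lam q)
    (hρs : ∀ q j, (ρs q j).PosSemidef ∧ (ρs q j).trace = 1)
    (hρ : ρ = ∑ q, (lam q : ℂ) • prodMat (ρs q)) :
    0 ≤ ((prodMat W - prodMat Wt) * ρ).trace := by
  subst hρ
  rw [Finset.mul_sum, trace_sum]
  refine Finset.sum_nonneg fun q _ => ?_
  rw [Matrix.mul_smul, trace_smul]
  exact smul_nonneg (mod_cast hlam q)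
    (trace_prodMat_sub_mul_prodMat_nonneg hord hpos fun j => (hρs q j).1)

/-- If `Wⱼ ⪰ W̃ⱼ ⪰ 0` for all `j` and `ρ` is fully separable, then
`Tr((⊗ⱼWⱼ − ⊗ⱼW̃ⱼ)ρ) ≥ 0`. -/
theorem stmt_3 {N : ℕ} {d : Fin N → ℕ}
    (W Wt : ∀ j, Matrix (Fin (d j)) (Fin (d j)) ℂ)
    (hord : ∀ j, (W j - Wt j).PosSemidef) (hpos : ∀ j, (Wt j).PosSemidef)
    (ρ : Matrix (∀ j, Fin (d j)) (∀ j, Fin (d j)) ℂ)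
    (m : ℕ) (lam : Fin m → ℝ) (ρs : Fin m → ∀ j, Matrix (Fin (d j)) (Fin (d j)) ℂ)
    (hlam : ∀ q, 0 ≤ lam q) (hsum : ∑ q, lam q = 1)
    (hρs : ∀ q j, (ρs q j).PosSemidef ∧ (ρs q j).trace = 1)
    (hρ : ρ = ∑ q, (lam q : ℂ) • prodMat (ρs q)) :
    0 ≤ ((prodMat W - prodMat Wt) * ρ).trace :=
  stmt_3_general W Wt hord hpos ρ m lam ρs hlam hρs hρ
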